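/- Numerical range nonsingularity condition: let A, B ∈ ℂ^{n×n} with A invertible. If the numerical range W(A⁻¹) is disjoint from −W(B) (i.e., W(A⁻¹) ∩ {−z : z ∈ W(B)} = ∅), then I + A U* B U is nonsingular for every unitary U. -/

import Mathlib

/-!
If `(1 + A C) v = 0` for a unit vector `v`, then `A⁻¹ v = -C v`, so `⟪v, A⁻¹ v⟫` lies in
`W(A⁻¹)` and its negative in `W(C)`. For `C = Uᴴ B U` the isometry `U` moves `v` to the unit
vector `U v` with `⟪v, C v⟫ = ⟪U v, B (U v)⟫`, so `W(C) ⊆ W(B)`.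
-/

open Matrix

noncomputable def numRange {n : ℕ} (A : Matrix (Fin n) (Fin n) ℂ) : Set ℂ :=
  {z | ∃ x : EuclideanSpace ℂ (Fin n), ‖x‖ = 1 ∧
    z = (inner ℂ x (Matrix.toEuclideanLin A x) : ℂ)}

section

variable {𝕜 ι : Type*} [RCLike 𝕜] [Fintype ι] [DecidableEq ι]

lemma Matrix.exists_norm_eq_one_toEuclideanLin_eq_zero {M : Matrix ι ι 𝕜} (hM : ¬IsUnit M) :
    ∃ x : EuclideanSpace 𝕜 ι, ‖x‖ = 1 ∧ toEuclideanLin M x = 0 := by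
  rw [isUnit_iff_isUnit_det, isUnit_iff_ne_zero, not_not] at hM
  obtain ⟨v, hv0, hv⟩ := exists_mulVec_eq_zero_iff.mpr hM
  have hy0 : WithLp.toLp 2 v ≠ 0 := by simpa using hv0
  refine ⟨(‖WithLp.toLp 2 v‖⁻¹ : 𝕜) • WithLp.toLp 2 v, norm_smul_inv_norm hy0, ?_⟩
  rw [map_smul, toLpLin_toLp, toLin'_apply, hv, WithLp.toLp_zero, smul_zero]

lemma Matrix.inner_toEuclideanLin_conjTranspose_mul (U M : Matrix ι ι 𝕜)
    (x y : EuclideanSpace 𝕜 ι) :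
    inner 𝕜 x (toEuclideanLin (Uᴴ * M) y) = inner 𝕜 (toEuclideanLin U x) (toEuclideanLin M y) := by
  rw [toLpLin_mul_same, toEuclideanLin_conjTranspose_eq_adjoint, LinearMap.comp_apply,
    LinearMap.adjoint_inner_right]

lemma Matrix.norm_toEuclideanLin_of_conjTranspose_mul_self {U : Matrix ι ι 𝕜} (hU : Uᴴ * U = 1)
    (x : EuclideanSpace 𝕜 ι) : ‖toEuclideanLin U x‖ = ‖x‖ :=
  (LinearMap.norm_map_iff_inner_map_map (toEuclideanLin U)).mpr (fun x y => by
    rw [← inner_toEuclideanLin_conjTranspose_mul, hU, toLpLin_one, LinearMap.id_apply]) x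

end

variable {n : ℕ}

lemma numRange_conjTranspose_mul_mul_subset {U : Matrix (Fin n) (Fin n) ℂ} (hU : Uᴴ * U = 1)
    (B : Matrix (Fin n) (Fin n) ℂ) : numRange (Uᴴ * B * U) ⊆ numRange B := by
  rintro _ ⟨x, hx, rfl⟩
  refine ⟨toEuclideanLin U x, by rw [norm_toEuclideanLin_of_conjTranspose_mul_self hU, hx], ?_⟩
  rw [mul_assoc, inner_toEuclideanLin_conjTranspose_mul, toLpLin_mul_same, LinearMap.comp_apply]

lemma exists_mem_numRange_inv_neg_mem_numRange {A C : Matrix (Fin n) (Fin n) ℂ} (hA : IsUnit A)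
    (hAC : ¬IsUnit (1 + A * C)) : ∃ z ∈ numRange A⁻¹, -z ∈ numRange C := by
  obtain ⟨x, hx, hx0⟩ := exists_norm_eq_one_toEuclideanLin_eq_zero hAC
  have hinv : A⁻¹ * (1 + A * C) = A⁻¹ + C := by
    rw [mul_add, mul_one, nonsing_inv_mul_cancel_left (h := (isUnit_iff_isUnit_det A).mp hA)]
  have hsum : toEuclideanLin A⁻¹ x + toEuclideanLin C x = 0 := by
    rw [← LinearMap.add_apply, ← map_add, ← hinv, toLpLin_mul_same, LinearMap.comp_apply, hx0,
      map_zero]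
  refine ⟨_, ⟨x, hx, rfl⟩, x, hx, ?_⟩
  rw [eq_neg_of_add_eq_zero_left hsum, inner_neg_right, neg_neg]

/-- Numerical range condition: W(A⁻¹) ∩ (−W(B)) = ∅ implies I + AU*BU
nonsingular for every unitary U. -/
theorem stmt18 {n : ℕ} (A B : Matrix (Fin n) (Fin n) ℂ) (hA : IsUnit A)
    (h : numRange A⁻¹ ∩ ((fun z => -z) '' numRange B) = ∅) :
    ∀ U : Matrix (Fin n) (Fin n) ℂ, Uᴴ * U = 1 → IsUnit (1 + A * Uᴴ * B * U) := by
  intro U hU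
  by_contra hsing
  obtain ⟨z, hz, hz'⟩ := exists_mem_numRange_inv_neg_mem_numRange (C := Uᴴ * B * U) hA
    (by simpa only [mul_assoc] using hsing)
  exact Set.eq_empty_iff_forall_notMem.mp h z
    ⟨hz, -z, numRange_conjTranspose_mul_mul_subset hU B hz', neg_neg z⟩
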